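/- arXiv:2205.01200 — 6 statements merged into one kernel-verified Lean document; each statement's English description precedes it below -/
import Mathlib

section
/- Any minor of a generator enriched lattice (L,G) may be expressed as a contraction followed by a deletion: if (K,H) is a minor of (L,G), then (K,H) = ((L,G)/z)|_H where z is the minimal element of K. -/
open Finset

/-- A generator-enriched lattice datum inside an ambient lattice `L`:
a minimal element `z` together with a finite generating set of elements
strictly above `z`. The underlying set of elements consists of all joins
of `z` with subsets of the generating set. -/
structure GEL (L : Type*) [Lattice L] [DecidableEq L] where
  z : L
  gens : Finset L
  lt_gens : ∀ g ∈ gens, z < g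

namespace GEL

variable {L K : Type*} [Lattice L] [OrderBot L] [DecidableEq L]

/-- The underlying set of elements of a generator enriched lattice. -/
def carrier (M : GEL L) : Finset L :=
  M.gens.powerset.image fun X => X.sup id ⊔ M.z

/-- Deletion of a set of generators. -/
def delete (M : GEL L) (I : Finset L) : GEL L :=
  ⟨M.z, M.gens \ I, fun g hg => M.lt_gens g (Finset.mem_sdiff.mp hg).1⟩

/-- Restriction to a set of generators. -/
def restrict (M : GEL L) (I : Finset L) : GEL L :=
  M.delete (M.gens \ I)

/-- Contraction by a set of generators. -/
def contract (M : GEL L) (I : Finset L) : GEL L :=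
  ⟨I.sup id ⊔ M.z,
   (M.gens.image fun g => g ⊔ (I.sup id ⊔ M.z)).erase (I.sup id ⊔ M.z),
   fun g hg => by
     obtain ⟨hne, hg'⟩ := Finset.mem_erase.mp hg
     obtain ⟨h, -, rfl⟩ := Finset.mem_image.mp hg'
     exact lt_of_le_of_ne le_sup_right (Ne.symm hne)⟩

open Classical in
/-- Contraction by an element: contract by all generators below it. -/
noncomputable def contractEl (M : GEL L) (ℓ : L) : GEL L :=
  M.contract (M.gens.filter fun g => g ≤ ℓ)

/-- A single deletion or contraction step. -/
def Step (M N : GEL L) : Prop :=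
  ∃ I ⊆ M.gens, N = M.delete I ∨ N = M.contract I

/-- `Minor M N` : `N` is a minor of `M`, i.e. obtained from `M` by a finite
sequence of deletions and contractions. -/
def Minor (M N : GEL L) : Prop :=
  Relation.ReflTransGen Step M N

/-- The generator enriched lattice on a lattice with `⊥`, with the given generating set. -/
def ofGens (G : Finset L) (hG : ∀ g ∈ G, (⊥ : L) < g) : GEL L :=
  ⟨⊥, G, hG⟩

/-- The underlying type of the minor poset of `T`: all minors of `T`
together with an adjoined minimum `none`. -/
abbrev MP (T : GEL L) := Option {M : GEL L // T.Minor M}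

/-- The order relation of the minor poset. -/
def mple (T : GEL L) : MP T → MP T → Prop
  | none, _ => True
  | some _, none => False
  | some A, some B => B.1.Minor A.1

/-- The rank function of the minor poset. -/
def mrank (T : GEL L) : MP T → ℕ
  | none => 0
  | some A => A.1.gens.card + 1

/-- A parallel: an element `ℓ` and distinct generators `g, h` with
`g ⊔ ℓ = h ⊔ ℓ ≠ ℓ`. -/
def HasParallel (M : GEL L) : Prop :=
  ∃ ℓ ∈ M.carrier, ∃ g ∈ M.gens, ∃ h ∈ M.gens,
    g ≠ h ∧ g ⊔ ℓ = h ⊔ ℓ ∧ g ⊔ ℓ ≠ ℓ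

/-- Isomorphism of generator enriched lattices: a join-preserving bijection of the
underlying sets carrying the generating set onto the generating set. -/
def GIso [Lattice K] [OrderBot K] [DecidableEq K] (M : GEL L) (N : GEL K) : Prop :=
  ∃ f : L → K, Set.BijOn f ↑M.carrier ↑N.carrier ∧
    (∀ a ∈ M.carrier, ∀ b ∈ M.carrier, f (a ⊔ b) = f a ⊔ f b) ∧
    f '' ↑M.gens = ↑N.gens

open Classical in
/-- The image generator enriched lattice `⟨f(I) | f(z)⟩` of a strong map. -/
noncomputable def map [Lattice K] [DecidableEq K] (f : L → K) (M : GEL L) : GEL K :=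
  ⟨f M.z, (M.gens.image f).filter fun y => f M.z < y,
   fun g hg => (Finset.mem_filter.mp hg).2⟩

/-- `T` lifts join irreducibles: for every `ℓ` and generator `g` with `g ≰ ℓ`,
the element `g ⊔ ℓ` is join irreducible in the interval `[ℓ, ⊤]`. -/
def LiftsJI (T : GEL L) : Prop :=
  ∀ ℓ : L, ∀ g ∈ T.gens, ¬ g ≤ ℓ →
    ∀ a b : L, ℓ ≤ a → ℓ ≤ b → g ⊔ ℓ = a ⊔ b → g ⊔ ℓ = a ∨ g ⊔ ℓ = b

end GEL

private lemma GEL.ext' {L : Type*} [Lattice L] [DecidableEq L] (A B : GEL L)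
    (h1 : A.z = B.z) (h2 : A.gens = B.gens) : A = B := by
  cases A; cases B; simp_all

open Classical in
private lemma GEL.minor_invariant {L : Type*} [Lattice L] [OrderBot L] [DecidableEq L]
    (T M : GEL L) (h : T.Minor M) :
    T.z ≤ M.z ∧ (∀ x ∈ M.gens, ∃ g ∈ T.gens, x = g ⊔ M.z) ∧
      M.z = (T.gens.filter fun g => g ≤ M.z).sup id ⊔ T.z := by
  induction h with
  | refl =>
    refine ⟨le_rfl, fun x hx => ⟨x, hx, (sup_eq_left.mpr (T.lt_gens x hx).le).symm⟩, ?_⟩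
    rw [Finset.filter_false_of_mem fun g hg => not_le_of_gt (T.lt_gens g hg),
      Finset.sup_empty, bot_sup_eq]
  | tail hTb hbc ih =>
    rename_i b c
    obtain ⟨hz, hgens, hfil⟩ := ih
    obtain ⟨I, hI, hND | hNC⟩ := hbc
    · subst hND
      exact ⟨hz, fun x hx => by
        obtain ⟨g, hg, hx'⟩ := hgens x (Finset.mem_sdiff.mp hx).1
        exact ⟨g, hg, hx'⟩, hfil⟩
    · subst hNC
      have hz' : (b.contract I).z = I.sup id ⊔ b.z := rfl
      have hbz : b.z ≤ (b.contract I).z := le_sup_right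
      refine ⟨hz.trans hbz, ?_, ?_⟩
      · intro x hx
        obtain ⟨hne, hx'⟩ := Finset.mem_erase.mp hx
        obtain ⟨m, hm, rfl⟩ := Finset.mem_image.mp hx'
        obtain ⟨g, hg, rfl⟩ := hgens m hm
        refine ⟨g, hg, ?_⟩
        rw [hz', sup_assoc]
        congr 1
        exact sup_eq_right.mpr le_sup_right
      · -- filter equation
        set z' := (b.contract I).z with hz'def
        refine le_antisymm ?_ ?_
        · rw [hz']
          have hbzle : b.z ≤ (T.gens.filter fun g => g ≤ z').sup id ⊔ T.z := by
            rw [hfil]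
            refine sup_le_sup_right (Finset.sup_mono ?_) T.z
            exact Finset.monotone_filter_right T.gens fun g _ hg => le_trans hg hbz
          refine sup_le (Finset.sup_le fun i hi => ?_) hbzle
          obtain ⟨g, hg, rfl⟩ := hgens i (hI hi)
          have hgle : g ≤ z' := by
            refine le_trans (le_sup_left : g ≤ g ⊔ b.z) ?_
            rw [hz']
            exact le_sup_of_le_left (Finset.le_sup (f := id) hi)
          refine sup_le ?_ hbzle
          have hmem : g ∈ T.gens.filter fun y => y ≤ z' := Finset.mem_filter.mpr ⟨hg, hgle⟩
          exact le_trans (Finset.le_sup (f := id) hmem) le_sup_left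
        · refine sup_le (Finset.sup_le fun g hg => (Finset.mem_filter.mp hg).2) ?_
          exact le_trans hz (le_trans (le_refl b.z) hbz)

/-- Any minor of a generator enriched lattice may be expressed as a contraction
followed by a deletion: `(K,H) = ((L,G)/0̂_K)|_H`. -/
theorem minor_eq_contract_then_restrict {L : Type*} [Lattice L] [OrderBot L]
    [DecidableEq L] (T M : GEL L) (h : T.Minor M) :
    M = (T.contractEl M.z).restrict M.gens := by
  classical
  obtain ⟨h1, h2, h3⟩ := GEL.minor_invariant T M h
  have hzc : (T.contractEl M.z).z = M.z := by
    show ((T.gens.filter fun g => g ≤ M.z).sup id ⊔ T.z) = M.z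
    rw [Finset.filter_congr_decidable]
    exact h3.symm
  have hgsub : M.gens ⊆ (T.contractEl M.z).gens := by
    intro x hx
    obtain ⟨g, hg, rfl⟩ := h2 x hx
    show g ⊔ M.z ∈ ((T.gens.image fun y => y ⊔ (T.contractEl M.z).z).erase
      (T.contractEl M.z).z)
    rw [hzc]
    refine Finset.mem_erase.mpr ⟨?_, Finset.mem_image.mpr ⟨g, hg, rfl⟩⟩
    exact (M.lt_gens _ hx).ne'
  refine (GEL.ext' _ _ ?_ ?_).symm
  · exact hzc
  · show (T.contractEl M.z).gens \ ((T.contractEl M.z).gens \ M.gens) = M.gens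
    rw [sdiff_sdiff_right_self]
    exact inf_eq_right.mpr hgsub
end

section
/- The minors of a generator enriched lattice (L,G) are precisely the generator enriched lattices of the form ⟨ℓ ∨ g₁, …, ℓ ∨ g_k | ℓ⟩ for ℓ ∈ L and g₁, …, g_k ∈ G with g_j ≰ ℓ for all j, where ⟨H|z⟩ denotes the generator enriched lattice with minimal element z, generating set H, and elements all joins of z with subsets of H. -/
open Finset

/-!
A deletion keeps the bottom element and shrinks the generating set; a contraction raises the bottom
to some `ℓ'` and joins every generator with `ℓ'`. Since joining with `ℓ` and then with `ℓ' ≥ ℓ` is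
joining with `ℓ'`, every minor has bottom `ℓ` and generators of the form `g ⊔ ℓ` with `g ∈ G`.
Conversely, every `ℓ ∈ L` is `⋁X ⊔ z` for some `X ⊆ G`, so contracting by `X` and deleting the
unwanted generators reaches any such lattice.
-/

namespace GEL

variable {L : Type*} [Lattice L] [DecidableEq L]

theorem ext {M N : GEL L} (hz : M.z = N.z) (hgens : M.gens = N.gens) : M = N := by
  cases M; cases N; congr

theorem image_sup_image_sup_of_le {s : Finset L} {a b : L} (hab : a ≤ b) :
    (s.image (· ⊔ a)).image (· ⊔ b) = s.image (· ⊔ b) := by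
  rw [Finset.image_image]
  exact Finset.image_congr fun g _ => by simp only [Function.comp, sup_assoc, sup_eq_right.mpr hab]

def JoinsOver (T M : GEL L) : Prop :=
  T.z ≤ M.z ∧ M.gens ⊆ T.gens.image (· ⊔ M.z)

theorem gens_subset_image_sup_z (T : GEL L) : T.gens ⊆ T.gens.image (· ⊔ T.z) := fun g hg =>
  Finset.mem_image.mpr ⟨g, hg, sup_eq_left.mpr (T.lt_gens g hg).le⟩

theorem JoinsOver.refl (T : GEL L) : T.JoinsOver T :=
  ⟨le_rfl, T.gens_subset_image_sup_z⟩

theorem JoinsOver.trans {T B C : GEL L} (hTB : T.JoinsOver B) (hBC : B.JoinsOver C) :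
    T.JoinsOver C := by
  refine ⟨hTB.1.trans hBC.1, hBC.2.trans ?_⟩
  calc B.gens.image (· ⊔ C.z)
      ⊆ (T.gens.image (· ⊔ B.z)).image (· ⊔ C.z) := Finset.image_subset_image hTB.2
    _ = T.gens.image (· ⊔ C.z) := image_sup_image_sup_of_le hBC.1

variable [OrderBot L]

theorem Step.joinsOver {B C : GEL L} (h : B.Step C) : B.JoinsOver C := by
  obtain ⟨I, -, rfl | rfl⟩ := h
  · exact ⟨le_rfl, Finset.sdiff_subset.trans B.gens_subset_image_sup_z⟩
  · exact ⟨le_sup_right, Finset.erase_subset _ _⟩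

theorem Minor.joinsOver {T M : GEL L} (h : T.Minor M) : T.JoinsOver M := by
  induction h with
  | refl => exact JoinsOver.refl T
  | tail _ hstep ih => exact ih.trans hstep.joinsOver

theorem step_of_z_eq_of_gens_subset {M N : GEL L} (hz : N.z = M.z) (hgens : N.gens ⊆ M.gens) :
    M.Step N :=
  ⟨M.gens \ N.gens, Finset.sdiff_subset, Or.inl <|
    ext hz (Finset.sdiff_sdiff_eq_self hgens).symm⟩

theorem minor_of_joinsOver {T M : GEL L} (hz : M.z ∈ T.carrier) (h : T.JoinsOver M) :
    T.Minor M := by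
  obtain ⟨X, hX, hXz⟩ := Finset.mem_image.mp hz
  have hcontract : (T.contract X).z = M.z := hXz
  have hgens : M.gens ⊆ (T.contract X).gens := fun y hy =>
    Finset.mem_erase.mpr ⟨hXz ▸ (M.lt_gens y hy).ne', hXz ▸ h.2 hy⟩
  exact .tail (.single ⟨X, Finset.mem_powerset.mp hX, Or.inr rfl⟩)
    (step_of_z_eq_of_gens_subset hcontract.symm hgens)

theorem minor_iff_joinsOver {T M : GEL L} (hz : M.z ∈ T.carrier) :
    T.Minor M ↔ T.JoinsOver M :=
  ⟨Minor.joinsOver, minor_of_joinsOver hz⟩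

theorem joinsOver_iff_of_mem_carrier {T M : GEL L} (hz : M.z ∈ T.carrier) :
    T.JoinsOver M ↔ ∃ (ℓ : L) (S : Finset L), S ⊆ T.gens ∧ (∀ g ∈ S, ¬ g ≤ ℓ) ∧
      M.z = ℓ ∧ M.gens = S.image fun g => g ⊔ ℓ := by
  have hTz : T.z ≤ M.z := by
    obtain ⟨X, -, hXz⟩ := Finset.mem_image.mp hz
    exact hXz ▸ le_sup_right
  simp only [JoinsOver, hTz, true_and, Finset.subset_image_iff]
  constructor
  · rintro ⟨S, hST, hS⟩
    refine ⟨M.z, S, hST, fun g hg hgz => ?_, rfl, hS.symm⟩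
    have hmem : g ⊔ M.z ∈ M.gens := hS ▸ Finset.mem_image_of_mem _ hg
    exact (M.lt_gens _ hmem).ne' (sup_eq_right.mpr hgz)
  · rintro ⟨_, S, hST, -, rfl, hS⟩
    exact ⟨S, hST, hS.symm⟩

end GEL

/-- The minors of `(L,G)` are precisely the generator enriched lattices
`⟨ℓ ∨ g₁, …, ℓ ∨ g_k | ℓ⟩` for `ℓ ∈ L` and `g₁, …, g_k ∈ G` with `g_j ≰ ℓ`. -/
theorem minor_iff_joins_over_element {L : Type*} [Lattice L] [OrderBot L]
    [DecidableEq L] (T : GEL L) (hcar : ∀ ℓ : L, ℓ ∈ T.carrier) (M : GEL L) :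
    T.Minor M ↔ ∃ (ℓ : L) (S : Finset L), S ⊆ T.gens ∧ (∀ g ∈ S, ¬ g ≤ ℓ) ∧
      M.z = ℓ ∧ M.gens = S.image fun g => g ⊔ ℓ := by
  rw [GEL.minor_iff_joinsOver (hcar M.z), GEL.joinsOver_iff_of_mem_carrier (hcar M.z)]
end

section
/- If L is a finite geometric lattice with generating set its atoms, then every minor of (L, irr(L)) is again a minimally generated geometric lattice; more precisely, the minors are exactly the generator enriched lattices ⟨ℓ₁,…,ℓ_k | ℓ⟩ where each ℓ_i covers ℓ in L. -/
/-!
Every generator of `(L, atoms)` covers its minimal element `⊥`, and in an upper semimodular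
lattice this property survives deletions (trivially) and contractions: if `z ⋖ a` and `a ≰ w`
for some `w ≥ z`, then `a ⊓ w = z`, so `w ⋖ a ⊔ w`. Conversely, given `ℓ` and elements `S`
covering it, contracting by the atoms below `ℓ` gives minimal element `ℓ` by atomisticity, and
each `x ∈ S` is `a ⊔ ℓ` for an atom `a ≤ x`, `a ≰ ℓ`; so restricting to `S` yields `⟨S | ℓ⟩`.
-/

open Finset

theorem isAtomistic_of_forall_eq_finset_sup {α : Type*} [Lattice α] [OrderBot α]
    (h : ∀ x : α, ∃ S : Finset α, (∀ a ∈ S, IsAtom a) ∧ x = S.sup id) : IsAtomistic α :=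
  ⟨fun x =>
    let ⟨S, hS, hx⟩ := h x
    ⟨S, hx ▸ Finset.isLUB_sup_id, hS⟩⟩

theorem CovBy.covBy_sup_of_not_le {α : Type*} [Lattice α] [IsUpperModularLattice α]
    {z a w : α} (h : z ⋖ a) (hzw : z ≤ w) (haw : ¬a ≤ w) : w ⋖ a ⊔ w := by
  have hinf : a ⊓ w = z := by
    rcases h.eq_or_eq (le_inf h.le hzw) inf_le_left with hz | ha
    · exact hz
    · exact absurd (inf_eq_left.1 ha) haw
  exact covBy_sup_of_inf_covBy_left (hinf ▸ h)

section Atomistic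

variable {α : Type*} [Lattice α] [OrderBot α] [IsAtomistic α]

theorem Finset.sup_filter_le_eq_of_atoms_subset {G : Finset α} (hG : ∀ a, IsAtom a → a ∈ G)
    (ℓ : α) [DecidablePred (· ≤ ℓ)] : (G.filter (· ≤ ℓ)).sup id = ℓ :=
  le_antisymm (Finset.sup_le fun _ ha => (mem_filter.1 ha).2)
    (le_iff_atom_le_imp.2 fun c hc hcℓ => le_sup (f := id) (mem_filter.2 ⟨hG c hc, hcℓ⟩))

theorem CovBy.exists_atom_sup_eq {ℓ x : α} (h : ℓ ⋖ x) : ∃ a, IsAtom a ∧ a ⊔ ℓ = x := by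
  obtain ⟨a, ha, hax, haℓ⟩ : ∃ a, IsAtom a ∧ a ≤ x ∧ ¬a ≤ ℓ := by
    simpa using mt le_iff_atom_le_imp.2 h.lt.not_ge
  refine ⟨a, ha, (h.eq_or_eq le_sup_right (sup_le hax h.le)).resolve_left fun haℓ' => ?_⟩
  exact haℓ (haℓ' ▸ le_sup_left)

end Atomistic

namespace GEL

variable {L : Type*} [Lattice L] [DecidableEq L]

theorem restrict_gens_of_subset {M : GEL L} {S : Finset L} (hS : S ⊆ M.gens) :
    (M.restrict S).gens = S :=
  Finset.sdiff_sdiff_eq_self hS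

def GensCover (M : GEL L) : Prop :=
  ∀ g ∈ M.gens, M.z ⋖ g

theorem GensCover.delete {M : GEL L} (h : M.GensCover) (I : Finset L) :
    (M.delete I).GensCover :=
  fun g hg => h g (mem_sdiff.1 hg).1

variable [OrderBot L]

theorem sup_z_mem_contract_gens {M : GEL L} (I : Finset L) {g : L} (hg : g ∈ M.gens)
    (hgz : ¬g ≤ (M.contract I).z) : g ⊔ (M.contract I).z ∈ (M.contract I).gens :=
  mem_erase.2 ⟨fun h => hgz (sup_eq_right.1 h), mem_image_of_mem _ hg⟩

theorem GensCover.contract [IsUpperModularLattice L] {M : GEL L} (h : M.GensCover)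
    (I : Finset L) : (M.contract I).GensCover := by
  intro g hg
  obtain ⟨hne, hg'⟩ := mem_erase.1 hg
  obtain ⟨a, ha, rfl⟩ := mem_image.1 hg'
  exact (h a ha).covBy_sup_of_not_le le_sup_right fun haz => hne (sup_eq_right.2 haz)

theorem GensCover.minor [IsUpperModularLattice L] {T M : GEL L} (hT : T.GensCover)
    (hM : T.Minor M) : M.GensCover := by
  induction hM with
  | refl => exact hT
  | tail _ hstep ih =>
    obtain ⟨I, -, rfl | rfl⟩ := hstep
    exacts [ih.delete I, ih.contract I]

theorem minor_restrict_contractEl (T : GEL L) (ℓ : L) (S : Finset L) :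
    T.Minor ((T.contractEl ℓ).restrict S) := by
  classical
  exact .tail (.single ⟨_, filter_subset _ _, .inr rfl⟩) ⟨_, sdiff_subset, .inl rfl⟩

section Atomistic

variable [IsAtomistic L] {T : GEL L} {ℓ : L}

theorem contractEl_z (hatoms : ∀ a, IsAtom a → a ∈ T.gens) (hzℓ : T.z ≤ ℓ) :
    (T.contractEl ℓ).z = ℓ := by
  classical
  simp only [contractEl, contract, sup_filter_le_eq_of_atoms_subset hatoms, sup_eq_left.2 hzℓ]

theorem mem_contractEl_gens_of_covBy (hatoms : ∀ a, IsAtom a → a ∈ T.gens) (hzℓ : T.z ≤ ℓ)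
    {x : L} (hx : ℓ ⋖ x) : x ∈ (T.contractEl ℓ).gens := by
  have hz := contractEl_z hatoms hzℓ
  obtain ⟨a, ha, rfl⟩ := hx.exists_atom_sup_eq
  have haz : ¬a ≤ (T.contractEl ℓ).z := by
    rw [hz]
    exact fun h => hx.lt.ne' (sup_eq_right.2 h)
  have hmem : a ⊔ (T.contractEl ℓ).z ∈ (T.contractEl ℓ).gens :=
    sup_z_mem_contract_gens _ (hatoms a ha) haz
  rwa [hz] at hmem

end Atomistic

end GEL

theorem geometric_minors_general {L : Type*} [Lattice L] [OrderBot L] [DecidableEq L]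
    (hsemimod : ∀ a b : L, a ⊓ b ⋖ a → b ⋖ a ⊔ b)
    (hatomistic : ∀ x : L, ∃ S : Finset L, (∀ a ∈ S, IsAtom a) ∧ x = S.sup id)
    (T : GEL L) (hz : T.z = ⊥) (hgens : ∀ g : L, g ∈ T.gens ↔ IsAtom g)
    (M : GEL L) :
    T.Minor M ↔ ∃ (ℓ : L) (S : Finset L), (∀ x ∈ S, ℓ ⋖ x) ∧
      M.z = ℓ ∧ M.gens = S := by
  have : IsUpperModularLattice L := ⟨hsemimod _ _⟩
  have : IsAtomistic L := isAtomistic_of_forall_eq_finset_sup hatomistic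
  have hatoms : ∀ a, IsAtom a → a ∈ T.gens := fun a => (hgens a).2
  constructor
  · intro hM
    have hT : T.GensCover := fun g hg => hz ▸ ((hgens g).1 hg).bot_covBy
    exact ⟨M.z, M.gens, hT.minor hM, rfl, rfl⟩
  · rintro ⟨ℓ, S, hS, hMz, hMgens⟩
    have hzℓ : T.z ≤ ℓ := hz ▸ bot_le
    have hM : M = (T.contractEl ℓ).restrict S :=
      GEL.ext (hMz.trans (GEL.contractEl_z hatoms hzℓ).symm) <| hMgens.trans <|
        (GEL.restrict_gens_of_subset fun x hx =>
          GEL.mem_contractEl_gens_of_covBy hatoms hzℓ (hS x hx)).symm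
    exact hM ▸ GEL.minor_restrict_contractEl T ℓ S

/-- For a finite geometric lattice `L`, minimally generated (generators = atoms),
the minors of `(L, irr L)` are exactly the generator enriched lattices
`⟨ℓ₁, …, ℓ_k | ℓ⟩` with each `ℓ_i` covering `ℓ`; in particular every minor is
again minimally generated and geometric. -/
theorem geometric_minors {L : Type*} [Lattice L] [OrderBot L] [DecidableEq L]
    [Fintype L]
    (hsemimod : ∀ a b : L, a ⊓ b ⋖ a → b ⋖ a ⊔ b)
    (hatomistic : ∀ x : L, ∃ S : Finset L, (∀ a ∈ S, IsAtom a) ∧ x = S.sup id)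
    (T : GEL L) (hz : T.z = ⊥) (hgens : ∀ g : L, g ∈ T.gens ↔ IsAtom g)
    (M : GEL L) :
    T.Minor M ↔ ∃ (ℓ : L) (S : Finset L), (∀ x ∈ S, ℓ ⋖ x) ∧
      M.z = ℓ ∧ M.gens = S :=
  geometric_minors_general hsemimod hatomistic T hz hgens M
end

section
/- Let P be a finite poset and L its lattice of lower order ideals with generating set the join-irreducibles (the principal ideals). For any order minor (I,J) of P (J a lower order ideal of P disjoint from I), the lattice minor ((L,irr(L))|_{I∪J})/J is isomorphic, as a generator enriched lattice, to the lattice of lower order ideals of the induced subposet I with its join-irreducible generating set. -/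
open Finset

/-- The minimally generated lattice of lower order ideals of a finite poset `P`:
the generating set consists of the principal ideals (the join-irreducibles). -/
noncomputable def iicGEL (P : Type*) [PartialOrder P] [Fintype P]
    [DecidableEq (LowerSet P)] : GEL (LowerSet P) :=
  GEL.ofGens (Finset.univ.image LowerSet.Iic) (by
    intro g hg
    simp only [Finset.mem_image] at hg
    obtain ⟨p, -, rfl⟩ := hg
    refine bot_lt_iff_ne_bot.mpr fun h => ?_
    have hp : p ∈ LowerSet.Iic p := by simp
    rw [h] at hp
    simp at hp)


private lemma mem_finsetSup' {α P : Type*} [PartialOrder P] {s : Finset α}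
    {f : α → LowerSet P} {x : P} : x ∈ s.sup f ↔ ∃ a ∈ s, x ∈ f a := by
  classical
  induction s using Finset.induction_on with
  | empty => simp [LowerSet.notMem_bot]
  | insert _ _ h ih => simp [Finset.sup_insert, LowerSet.mem_sup_iff, ih]

/-- For an order minor `(I,J)` of `P`, the minor `((J(P), irr)|_{I∪J})/J` of the
minimally generated lattice of lower order ideals of `P` is isomorphic, as a
generator enriched lattice, to the minimally generated lattice of lower order
ideals of the induced subposet `I`. -/
theorem orderMinor_lattice_minor_iso {P : Type*} [PartialOrder P] [Fintype P]
    [DecidableEq P] [DecidableEq (LowerSet P)] (I J : Finset P)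
    [DecidableEq (LowerSet {x : P // x ∈ I})]
    (hdisj : Disjoint I J) (hJ : ∀ x ∈ J, ∀ y : P, y ≤ x → y ∈ J) :
    GEL.GIso
      (((iicGEL P).restrict ((I ∪ J).image LowerSet.Iic)).contract
        (J.image LowerSet.Iic))
      (iicGEL {x : P // x ∈ I}) := by
  classical
  set M : GEL (LowerSet P) :=
    ((iicGEL P).restrict ((I ∪ J).image LowerSet.Iic)).contract (J.image LowerSet.Iic) with hMdef
  set N := iicGEL {x : P // x ∈ I} with hNdef
  set zJ : LowerSet P := (J.image LowerSet.Iic).sup id ⊔ ⊥ with hzJdef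
  have hMz : M.z = zJ := rfl
  have hzJmem : ∀ x : P, x ∈ zJ ↔ x ∈ J := by
    intro x
    simp only [hzJdef, LowerSet.mem_sup_iff, LowerSet.notMem_bot, or_false,
      mem_finsetSup', Finset.mem_image]
    constructor
    · rintro ⟨a, ⟨j, hj, rfl⟩, hx⟩
      exact hJ j hj x (LowerSet.mem_Iic_iff.mp hx)
    · intro hx
      exact ⟨LowerSet.Iic x, ⟨x, hx, rfl⟩, LowerSet.mem_Iic_iff.mpr le_rfl⟩
  have hRgens : ((iicGEL P).restrict ((I ∪ J).image LowerSet.Iic)).gens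
      = (I ∪ J).image LowerSet.Iic := by
    show (Finset.univ.image LowerSet.Iic) \ ((Finset.univ.image LowerSet.Iic) \ _) = _
    rw [Finset.sdiff_sdiff_self_left, Finset.inter_eq_right]
    exact Finset.image_subset_image (Finset.subset_univ _)
  have hMgens0 : M.gens
      = (((I ∪ J).image LowerSet.Iic).image (fun g => g ⊔ zJ)).erase zJ := by
    have h0 : M.gens = ((((iicGEL P).restrict ((I ∪ J).image LowerSet.Iic)).gens).image
        (fun g => g ⊔ zJ)).erase zJ := rfl
    rw [h0, hRgens]
  have hGens : ∀ g, g ∈ M.gens ↔ ∃ p ∈ I, g = LowerSet.Iic p ⊔ zJ := by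
    intro g
    rw [hMgens0]
    simp only [Finset.mem_erase, Finset.mem_image, Finset.mem_union]
    constructor
    · rintro ⟨hne, h, ⟨p, hp, rfl⟩, rfl⟩
      rcases hp with hp | hp
      · exact ⟨p, hp, rfl⟩
      · exfalso
        exact hne (sup_eq_right.mpr (LowerSet.Iic_le.mpr ((hzJmem p).mpr hp)))
    · rintro ⟨p, hp, rfl⟩
      refine ⟨?_, LowerSet.Iic p, ⟨p, Or.inl hp, rfl⟩, rfl⟩
      intro hEq
      have hpmem : p ∈ LowerSet.Iic p ⊔ zJ :=
        LowerSet.mem_sup_iff.mpr (Or.inl (LowerSet.mem_Iic_iff.mpr le_rfl))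
      rw [hEq] at hpmem
      exact Finset.disjoint_left.mp hdisj hp ((hzJmem p).mp hpmem)
  have hMcar : ∀ K : LowerSet P, K ∈ M.carrier ↔
      (zJ ≤ K ∧ ∀ x ∈ K, x ∈ J ∨ ∃ p ∈ I, p ∈ K ∧ x ≤ p) := by
    intro K
    unfold GEL.carrier
    simp only [Finset.mem_image, Finset.mem_powerset, hMz]
    constructor
    · rintro ⟨X, hX, rfl⟩
      refine ⟨le_sup_right, ?_⟩
      intro x hx
      rcases LowerSet.mem_sup_iff.mp hx with hx | hx
      · obtain ⟨g, hg, hxg⟩ := mem_finsetSup'.mp hx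
        obtain ⟨p, hpI, rfl⟩ := (hGens g).mp (hX hg)
        rcases LowerSet.mem_sup_iff.mp hxg with hxp | hxJ
        · refine Or.inr ⟨p, hpI, ?_, LowerSet.mem_Iic_iff.mp hxp⟩
          have hgle : (LowerSet.Iic p ⊔ zJ : LowerSet P) ≤ X.sup id ⊔ zJ :=
            le_trans (Finset.le_sup (f := id) hg) le_sup_left
          exact hgle (LowerSet.mem_sup_iff.mpr
            (Or.inl (LowerSet.mem_Iic_iff.mpr le_rfl)))
        · exact Or.inl ((hzJmem x).mp hxJ)
      · exact Or.inl ((hzJmem x).mp hx)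
    · rintro ⟨hzK, hchar⟩
      refine ⟨M.gens.filter (fun g => g ≤ K), Finset.filter_subset _ _, ?_⟩
      apply le_antisymm
      · refine sup_le (Finset.sup_le ?_) hzK
        intro g hg
        exact (Finset.mem_filter.mp hg).2
      · intro x hx
        rcases hchar x hx with hxJ | ⟨p, hpI, hpK, hxp⟩
        · exact LowerSet.mem_sup_iff.mpr (Or.inr ((hzJmem x).mpr hxJ))
        · have hg : (LowerSet.Iic p ⊔ zJ : LowerSet P) ∈ M.gens.filter (fun g => g ≤ K) := by
            refine Finset.mem_filter.mpr ⟨(hGens _).mpr ⟨p, hpI, rfl⟩, ?_⟩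
            exact sup_le (LowerSet.Iic_le.mpr hpK) hzK
          refine LowerSet.mem_sup_iff.mpr (Or.inl ?_)
          exact Finset.le_sup (f := id) hg (LowerSet.mem_sup_iff.mpr
            (Or.inl (LowerSet.mem_Iic_iff.mpr hxp)))
  have hNgens : N.gens = Finset.univ.image LowerSet.Iic := rfl
  have hNcar : ∀ S : LowerSet {x : P // x ∈ I}, S ∈ N.carrier := by
    intro S
    refine Finset.mem_image.mpr
      ⟨(Finset.univ.filter (· ∈ S)).image LowerSet.Iic, ?_, ?_⟩
    · rw [Finset.mem_powerset, hNgens]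
      exact Finset.image_subset_image (Finset.subset_univ _)
    · show _ ⊔ (⊥ : LowerSet _) = S
      rw [sup_bot_eq]
      apply le_antisymm
      · intro x hx
        obtain ⟨g, hg, hxg⟩ := mem_finsetSup'.mp hx
        obtain ⟨q, hq, rfl⟩ := Finset.mem_image.mp hg
        exact S.lower (LowerSet.mem_Iic_iff.mp hxg) ((Finset.mem_filter.mp hq).2)
      · intro x hx
        refine mem_finsetSup'.mpr ⟨LowerSet.Iic x, ?_, LowerSet.mem_Iic_iff.mpr le_rfl⟩
        exact Finset.mem_image_of_mem _ (Finset.mem_filter.mpr ⟨Finset.mem_univ _, hx⟩)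
  let f : LowerSet P → LowerSet {x : P // x ∈ I} :=
    fun K => ⟨Subtype.val ⁻¹' ↑K, fun a b hba ha => K.lower hba ha⟩
  have hfmem : ∀ (K : LowerSet P) (x : {x : P // x ∈ I}), x ∈ f K ↔ (x : P) ∈ K :=
    fun _ _ => Iff.rfl
  have hfsup : ∀ a b : LowerSet P, f (a ⊔ b) = f a ⊔ f b := by
    intro a b
    refine SetLike.ext fun x => ?_
    simp only [hfmem, LowerSet.mem_sup_iff]
  have hfIic : ∀ p (hp : p ∈ I), f (LowerSet.Iic p ⊔ zJ) = LowerSet.Iic ⟨p, hp⟩ := by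
    intro p hp
    refine SetLike.ext fun x => ?_
    simp only [hfmem, LowerSet.mem_sup_iff, LowerSet.mem_Iic_iff]
    constructor
    · rintro (h | h)
      · exact Subtype.coe_le_coe.mp h
      · exact absurd ((hzJmem _).mp h) (Finset.disjoint_left.mp hdisj x.2)
    · intro h
      exact Or.inl (Subtype.coe_le_coe.mpr h)
  refine ⟨f, ⟨fun K _ => hNcar (f K), ?_, ?_⟩, fun a _ b _ => hfsup a b, ?_⟩
  · -- InjOn
    intro K1 hK1 K2 hK2 hf
    obtain ⟨hz1, h1⟩ := (hMcar K1).mp hK1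
    obtain ⟨hz2, h2⟩ := (hMcar K2).mp hK2
    have key : ∀ (A B : LowerSet P), zJ ≤ B →
        (∀ x ∈ A, x ∈ J ∨ ∃ p ∈ I, p ∈ A ∧ x ≤ p) → f A = f B → A ≤ B := by
      intro A B hzB hA hAB x hx
      rcases hA x hx with hxJ | ⟨p, hpI, hpA, hxp⟩
      · exact hzB ((hzJmem x).mpr hxJ)
      · have : (⟨p, hpI⟩ : {x : P // x ∈ I}) ∈ f A := (hfmem A _).mpr hpA
        rw [hAB] at this
        exact B.lower hxp ((hfmem B _).mp this)
    exact le_antisymm (key K1 K2 hz2 h1 hf) (key K2 K1 hz1 h2 hf.symm)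
  · -- SurjOn
    intro S _
    set K : LowerSet P :=
      zJ ⊔ (Finset.univ.filter (· ∈ S)).sup (fun q : {x : P // x ∈ I} => LowerSet.Iic (q : P))
      with hKdef
    have hmemK : ∀ x : P, x ∈ K ↔ x ∈ J ∨ ∃ q : {x : P // x ∈ I}, q ∈ S ∧ x ≤ (q : P) := by
      intro x
      simp only [hKdef, LowerSet.mem_sup_iff, hzJmem, mem_finsetSup', Finset.mem_filter,
        Finset.mem_univ, true_and, LowerSet.mem_Iic_iff]
    refine ⟨K, ?_, ?_⟩
    · refine (hMcar K).mpr ⟨le_sup_left, ?_⟩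
      intro x hx
      rcases (hmemK x).mp hx with hxJ | ⟨q, hq, hxq⟩
      · exact Or.inl hxJ
      · refine Or.inr ⟨(q : P), q.2, ?_, hxq⟩
        exact (hmemK _).mpr (Or.inr ⟨q, hq, le_rfl⟩)
    · refine SetLike.ext fun x => ?_
      rw [hfmem, hmemK]
      constructor
      · rintro (hxJ | ⟨q, hq, hxq⟩)
        · exact absurd hxJ (Finset.disjoint_left.mp hdisj x.2)
        · exact S.lower (Subtype.coe_le_coe.mp hxq) hq
      · intro hx
        exact Or.inr ⟨x, hx, le_rfl⟩
  · -- gens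
    ext y
    simp only [Set.mem_image, Finset.mem_coe]
    constructor
    · rintro ⟨g, hg, rfl⟩
      obtain ⟨p, hp, rfl⟩ := (hGens g).mp hg
      rw [hNgens]
      rw [hfIic p hp]
      exact Finset.mem_image_of_mem _ (Finset.mem_univ _)
    · intro hy
      rw [hNgens] at hy
      obtain ⟨q, _, rfl⟩ := Finset.mem_image.mp hy
      refine ⟨LowerSet.Iic (q : P) ⊔ zJ, (hGens _).mpr ⟨q, q.2, rfl⟩, ?_⟩
      rw [hfIic _ q.2]
end

section
/- If (L,G) is a generator enriched lattice that lifts join irreducibles, then for minors (K₁,H₁) and (K₂,H₂) of (L,G), (K₁,H₁) is a minor of (K₂,H₂) if and only if K₁ ⊆ K₂ as subsets of L. -/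
open Finset

section Aux

namespace GEL

variable {L : Type*} [Lattice L] [OrderBot L] [DecidableEq L]

lemma mem_carrier' {M : GEL L} {y : L} :
    y ∈ M.carrier ↔ ∃ X, X ⊆ M.gens ∧ X.sup id ⊔ M.z = y := by
  simp only [carrier, Finset.mem_image, Finset.mem_powerset]

lemma z_mem_carrier (M : GEL L) : M.z ∈ M.carrier :=
  mem_carrier'.mpr ⟨∅, by simp⟩

lemma gen_mem_carrier {M : GEL L} {g : L} (hg : g ∈ M.gens) : g ∈ M.carrier :=
  mem_carrier'.mpr ⟨{g}, Finset.singleton_subset_iff.mpr hg, by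
    simp [sup_eq_left.mpr (M.lt_gens g hg).le]⟩

lemma carrier_delete_subset (M : GEL L) (I : Finset L) :
    (M.delete I).carrier ⊆ M.carrier := by
  intro y hy
  rw [mem_carrier'] at hy ⊢
  obtain ⟨X, hX, h⟩ := hy
  exact ⟨X, hX.trans (Finset.sdiff_subset), h⟩

lemma contract_z (M : GEL L) (I : Finset L) :
    (M.contract I).z = I.sup id ⊔ M.z := rfl

lemma contract_gens (M : GEL L) (I : Finset L) :
    (M.contract I).gens =
      (M.gens.image fun g => g ⊔ (I.sup id ⊔ M.z)).erase (I.sup id ⊔ M.z) := rfl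

lemma carrier_contract_subset {M : GEL L} {I : Finset L} (hI : I ⊆ M.gens) :
    (M.contract I).carrier ⊆ M.carrier := by
  intro y hy
  rw [mem_carrier'] at hy ⊢
  obtain ⟨X, hX, h⟩ := hy
  rw [contract_gens] at hX
  rw [contract_z] at h
  refine ⟨I ∪ M.gens.filter (fun g => g ⊔ (I.sup id ⊔ M.z) ∈ X),
    Finset.union_subset hI (Finset.filter_subset _ _), ?_⟩
  rw [← h]
  apply le_antisymm
  · refine sup_le (Finset.sup_le ?_) (le_sup_of_le_right le_sup_right)
    intro g hg
    rcases Finset.mem_union.mp hg with hg | hg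
    · exact le_sup_of_le_right (le_sup_of_le_left (Finset.le_sup (f := id) hg))
    · obtain ⟨-, hgX⟩ := Finset.mem_filter.mp hg
      exact le_sup_of_le_left (le_trans le_sup_left (Finset.le_sup (f := id) hgX))
  · have hz : I.sup id ⊔ M.z ≤
        (I ∪ M.gens.filter (fun g => g ⊔ (I.sup id ⊔ M.z) ∈ X)).sup id ⊔ M.z := by
      refine sup_le ?_ le_sup_right
      refine le_sup_of_le_left (Finset.sup_le fun g hg => Finset.le_sup (f := id) ?_)
      exact Finset.mem_union_left _ hg
    refine sup_le (Finset.sup_le ?_) hz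
    intro x hx
    have hx' := hX hx
    obtain ⟨-, hx''⟩ := Finset.mem_erase.mp hx'
    obtain ⟨g, hg, rfl⟩ := Finset.mem_image.mp hx''
    have hgmem : g ∈ M.gens.filter (fun g => g ⊔ (I.sup id ⊔ M.z) ∈ X) :=
      Finset.mem_filter.mpr ⟨hg, hx⟩
    refine sup_le ?_ hz
    exact le_trans (Finset.le_sup (f := id) (Finset.mem_union_right _ hgmem)) le_sup_left

lemma carrier_subset_of_minor {M N : GEL L} (h : M.Minor N) :
    N.carrier ⊆ M.carrier := by
  induction h with
  | refl => exact fun _ h => h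
  | tail _ step ih =>
    refine subset_trans ?_ ih
    obtain ⟨I, hI, rfl | rfl⟩ := step
    · exact carrier_delete_subset _ _
    · exact carrier_contract_subset hI

lemma gens_eq_sup_of_minor {T M : GEL L} (h : T.Minor M) :
    ∀ g ∈ M.gens, ∃ t ∈ T.gens, g = t ⊔ M.z := by
  induction h with
  | refl => exact fun g hg => ⟨g, hg, (sup_eq_left.mpr (T.lt_gens g hg).le).symm⟩
  | tail _ step ih =>
    obtain ⟨I, hI, rfl | rfl⟩ := step
    · exact fun g hg => ih g (Finset.mem_sdiff.mp hg).1
    · intro g hg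
      rw [contract_gens] at hg
      obtain ⟨-, hg'⟩ := Finset.mem_erase.mp hg
      obtain ⟨a, ha, rfl⟩ := Finset.mem_image.mp hg'
      obtain ⟨t, ht, rfl⟩ := ih a ha
      refine ⟨t, ht, ?_⟩
      rw [contract_z, sup_assoc]
      congr 1
      exact sup_eq_right.mpr le_sup_right

lemma ji_sup {T : GEL L} (hLJ : T.LiftsJI) (ℓ t : L) (ht : t ∈ T.gens)
    (htl : ¬ t ≤ ℓ) (Y : Finset L) (h : t ⊔ ℓ = Y.sup id ⊔ ℓ) :
    ∃ g ∈ Y, t ⊔ ℓ = g ⊔ ℓ := by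
  induction Y using Finset.induction_on with
  | empty =>
    exfalso
    simp only [Finset.sup_empty, bot_sup_eq] at h
    exact htl (le_trans le_sup_left h.le)
  | insert a Y hni ih =>
    rw [Finset.sup_insert, id] at h
    have h' : t ⊔ ℓ = (a ⊔ ℓ) ⊔ (Y.sup id ⊔ ℓ) := by
      rw [h]; rw [sup_sup_sup_comm, sup_idem]
    rcases hLJ ℓ t ht htl (a ⊔ ℓ) (Y.sup id ⊔ ℓ) le_sup_right le_sup_right h' with
      hc | hc
    · exact ⟨a, Finset.mem_insert_self _ _, hc⟩
    · obtain ⟨g, hg, hg'⟩ := ih hc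
      exact ⟨g, Finset.mem_insert_of_mem hg, hg'⟩

lemma gel_ext {M N : GEL L} (hz : M.z = N.z) (hg : M.gens = N.gens) : M = N := by
  cases M; cases N; simp_all

end GEL

end Aux


/-- If `(L,G)` lifts join irreducibles, then for minors `(K₁,H₁)` and `(K₂,H₂)`
of `(L,G)`, `(K₁,H₁)` is a minor of `(K₂,H₂)` iff `K₁ ⊆ K₂`. -/
theorem liftsJI_minor_iff_subset {L : Type*} [Lattice L] [OrderBot L]
    [DecidableEq L] (T : GEL L) (hLJ : T.LiftsJI)
    (M₁ M₂ : GEL L) (h1 : T.Minor M₁) (h2 : T.Minor M₂) :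
    M₂.Minor M₁ ↔ M₁.carrier ⊆ M₂.carrier := by
  constructor
  · exact fun h => GEL.carrier_subset_of_minor h
  · intro hsub
    have hz1 : M₁.z ∈ M₂.carrier := hsub M₁.z_mem_carrier
    obtain ⟨X, hX, hXz⟩ := GEL.mem_carrier'.mp hz1
    set N := M₂.contract X with hN
    have hNz : N.z = M₁.z := by rw [hN, GEL.contract_z, hXz]
    have hz21 : M₂.z ≤ M₁.z := hXz ▸ le_sup_right
    have hgens : M₁.gens ⊆ N.gens := by
      intro g0 hg0
      have hg0c : g0 ∈ M₂.carrier := hsub (GEL.gen_mem_carrier hg0)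
      obtain ⟨Y, hY, hYe⟩ := GEL.mem_carrier'.mp hg0c
      obtain ⟨t, ht, hte⟩ := GEL.gens_eq_sup_of_minor h1 g0 hg0
      have hlt : M₁.z < g0 := M₁.lt_gens g0 hg0
      have htl : ¬ t ≤ M₁.z := by
        intro hle
        exact hlt.ne' (by rw [hte, sup_eq_right.mpr hle])
      have hYe' : Y.sup id ⊔ M₁.z = g0 := by
        apply le_antisymm
        · exact sup_le (le_trans le_sup_left hYe.le) hlt.le
        · rw [← hYe]
          exact sup_le le_sup_left (le_trans hz21 le_sup_right)
      have hh2 : t ⊔ M₁.z = Y.sup id ⊔ M₁.z := by rw [hYe', ← hte]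
      obtain ⟨g, hgY, hge⟩ := GEL.ji_sup hLJ M₁.z t ht htl Y hh2
      rw [hN, GEL.contract_gens]
      refine Finset.mem_erase.mpr ⟨?_, Finset.mem_image.mpr ⟨g, hY hgY, ?_⟩⟩
      · rw [hXz]; exact hlt.ne'
      · rw [hXz, ← hge, ← hte]
    have step1 : GEL.Step M₂ N := ⟨X, hX, Or.inr rfl⟩
    have step2 : GEL.Step N M₁ := by
      refine ⟨N.gens \ M₁.gens, Finset.sdiff_subset, Or.inl ?_⟩
      refine GEL.gel_ext hNz.symm ?_
      rw [GEL.delete]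
      exact ((Finset.sdiff_sdiff_self_left _ _).trans
        (Finset.inter_eq_right.mpr hgens)).symm
    exact Relation.ReflTransGen.tail (Relation.ReflTransGen.single step1) step2
end

section
/- Let (L,G) be a generator enriched lattice and θ : B_{|G|} → L the canonical strong surjection sending X ⊆ [n] to the join of the generators indexed by X. Then (L,G) has no parallels if and only if for every ℓ ∈ L the fiber θ⁻¹(ℓ) has a unique minimal element in the Boolean algebra B_{|G|}. -/
open Finset

/-!
Without parallels, a generator `g` of a set `X` with `⋁ (X \ {g}) < ⋁ X` lies in every set `Y`
with `⋁ Y = ⋁ X`: peeling the generators of `Y` off one at a time, the first one whose join with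
`⋁ (X \ {g})` is not absorbed is parallel to `g` over that element, hence equal to `g`. So an
inclusion-minimal member of a fiber is contained in all of them. Conversely, parallel generators
`g ≠ h` over `ℓ = ⋁ S` put `S ∪ {g}` and `S ∪ {h}` in the fiber of `g ⊔ ℓ`, and a least member
of that fiber would be contained in `S`, forcing `g ⊔ ℓ ≤ ℓ`.
-/

section NoParallels

variable {ι L : Type*} [SemilatticeSup L] [OrderBot L]

def NoParallels (f : ι → L) : Prop :=
  ∀ ℓ i j, f i ⊔ ℓ = f j ⊔ ℓ → f i ⊔ ℓ ≠ ℓ → i = j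

variable [DecidableEq ι] {f : ι → L}

theorem NoParallels.mem_of_sup_sup_eq (hf : NoParallels f) {ℓ : L} {i : ι} (hi : f i ⊔ ℓ ≠ ℓ)
    {Y : Finset ι} (hY : Y.sup f ⊔ ℓ = f i ⊔ ℓ) : i ∈ Y := by
  induction Y using Finset.induction_on with
  | empty =>
    rw [Finset.sup_empty, bot_sup_eq] at hY
    exact absurd hY.symm hi
  | insert j Y _ ih =>
    rw [Finset.sup_insert, sup_assoc] at hY
    set m := Y.sup f ⊔ ℓ
    by_cases hj : f j ≤ m
    · rw [sup_eq_right.mpr hj] at hY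
      exact Finset.mem_insert_of_mem (ih hY)
    · have hm : f i ⊔ m = f j ⊔ m := by
        refine le_antisymm (sup_le ?_ le_sup_right) ?_
        · rw [hY]; exact le_sup_left
        · rw [hY]; exact sup_le_sup_left le_sup_right _
      have hij : i = j := hf m i j hm (by rw [hm]; exact fun h => hj (sup_eq_right.mp h))
      exact hij ▸ Finset.mem_insert_self i Y

theorem NoParallels.mem_of_sup_erase_ne (hf : NoParallels f) {X Y : Finset ι} {i : ι}
    (hi : i ∈ X) (herase : (X.erase i).sup f ≠ X.sup f) (hY : Y.sup f = X.sup f) : i ∈ Y := by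
  have hX : f i ⊔ (X.erase i).sup f = X.sup f := by
    rw [← Finset.sup_insert, Finset.insert_erase hi]
  refine hf.mem_of_sup_sup_eq (by rwa [hX, ne_comm]) ?_
  rw [hY, hX, sup_eq_left.mpr (Finset.sup_mono (Finset.erase_subset i X))]

theorem NoParallels.exists_isLeast_fiber (hf : NoParallels f) {ℓ : L}
    (hℓ : ∃ S : Finset ι, S.sup f = ℓ) : ∃ X, IsLeast {X : Finset ι | X.sup f = ℓ} X := by
  obtain ⟨X, hX⟩ := exists_minimal_of_wellFoundedLT _ hℓ
  refine ⟨X, hX.prop, fun Y hY i hi => hf.mem_of_sup_erase_ne hi (fun herase => ?_)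
    (hY.trans hX.prop.symm)⟩
  have hsub : X ⊆ X.erase i := hX.le_of_le (herase.trans hX.prop) (Finset.erase_subset i X)
  exact Finset.notMem_erase i X (hsub hi)

theorem noParallels_of_forall_exists_isLeast
    (h : ∀ ℓ, ∃ X, IsLeast {X : Finset ι | X.sup f = ℓ} X)
    (hsurj : ∀ ℓ, ∃ S : Finset ι, S.sup f = ℓ) : NoParallels f := by
  intro ℓ i j hij hne
  by_contra hne_ij
  obtain ⟨S, rfl⟩ := hsurj ℓ
  obtain ⟨X, hXfib, hX⟩ := h (f i ⊔ S.sup f)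
  have hXi : X ⊆ insert i S := hX (Finset.sup_insert (f := f))
  have hXj : X ⊆ insert j S := hX ((Finset.sup_insert (f := f)).trans hij.symm)
  have hXS : X ⊆ S := by
    intro a ha
    rcases Finset.mem_insert.mp (hXi ha) with rfl | haS
    · exact (Finset.mem_insert.mp (hXj ha)).resolve_left hne_ij
    · exact haS
  exact hne (le_antisymm (hXfib ▸ Finset.sup_mono hXS) le_sup_right)

theorem noParallels_iff_forall_exists_isLeast (hsurj : ∀ ℓ, ∃ S : Finset ι, S.sup f = ℓ) :
    NoParallels f ↔ ∀ ℓ, ∃ X, IsLeast {X : Finset ι | X.sup f = ℓ} X :=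
  ⟨fun hf ℓ => hf.exists_isLeast_fiber (hsurj ℓ),
    fun h => noParallels_of_forall_exists_isLeast h hsurj⟩

end NoParallels

namespace GEL

variable {L : Type*} [Lattice L] [OrderBot L] [DecidableEq L] {T : GEL L}

theorem exists_sup_val_eq (hcar : ∀ ℓ : L, ℓ ∈ T.carrier) (ℓ : L) :
    ∃ S : Finset T.gens, S.sup Subtype.val = ℓ := by
  have hz : T.z = ⊥ := by
    obtain ⟨S, -, hS⟩ := Finset.mem_image.mp (hcar ⊥)
    exact le_bot_iff.mp (hS ▸ le_sup_right)
  obtain ⟨S, hSG, hS⟩ := Finset.mem_image.mp (hcar ℓ)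
  refine ⟨S.subtype (· ∈ T.gens), ?_⟩
  have hmap := Finset.subtype_map_of_mem (p := (· ∈ T.gens)) (Finset.mem_powerset.mp hSG)
  rw [← hS, hz, sup_bot_eq]
  conv_rhs => rw [← hmap, Finset.sup_map]
  rfl

theorem not_hasParallel_iff (hcar : ∀ ℓ : L, ℓ ∈ T.carrier) :
    ¬ T.HasParallel ↔ NoParallels (Subtype.val : T.gens → L) := by
  unfold HasParallel NoParallels
  simp only [hcar, true_and, Subtype.forall, Subtype.ext_iff, not_exists, not_and]
  exact forall₄_congr fun _ _ _ _ => forall_congr' fun _ => by tauto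

end GEL

/-- `(L,G)` has no parallels iff every fiber of the canonical strong map
`θ : B_{|G|} → L`, `θ(X) = ⋁_{g ∈ X} g`, has a unique minimal element. -/
theorem noParallels_iff_unique_min_fiber {L : Type*} [Lattice L] [OrderBot L]
    [DecidableEq L] (T : GEL L) (hcar : ∀ ℓ : L, ℓ ∈ T.carrier) :
    ¬ T.HasParallel ↔
      ∀ ℓ : L, ∃ X : Finset {g : L // g ∈ T.gens},
        (X.image Subtype.val).sup id = ℓ ∧
        ∀ Y : Finset {g : L // g ∈ T.gens},
          (Y.image Subtype.val).sup id = ℓ → X ⊆ Y := by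
  rw [GEL.not_hasParallel_iff hcar,
    noParallels_iff_forall_exists_isLeast (GEL.exists_sup_val_eq hcar)]
  simp only [Finset.sup_image, Function.id_comp]
  rfl
end
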